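/- arXiv:2501.08698 — 7 statements merged into one kernel-verified Lean document; each statement's English description precedes it below -/
import Mathlib

section
/- Let G be a graph, π a linear order of V(G), and r a positive integer. For all vertices u, v with u <_π v, every path of length at most r connecting u and v intersects SReach_r[G,π,v] \ {v}. -/
variable {V : Type*}

/-- `u` is strongly `r`-reachable from `v` w.r.t. the order `π`: `u ≤ v` and there is a
path of length at most `r` from `v` to `u` all of whose internal vertices are `> v`. -/
def SReach (G : SimpleGraph V) (π : LinearOrder V) (r : ℕ) (v : V) : Set V :=
  letI := π
  {u | u ≤ v ∧ ∃ p : G.Walk v u, p.IsPath ∧ p.length ≤ r ∧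
      ∀ w ∈ p.support, w ≠ v → w ≠ u → v < w}

namespace SimpleGraph.Walk

theorem exists_eq_append_of_end_mem {G : SimpleGraph V} {S : Set V} :
    ∀ {x y : V} (p : G.Walk x y), y ∈ S →
      ∃ w ∈ S, ∃ (q₁ : G.Walk x w) (q₂ : G.Walk w y),
        p = q₁.append q₂ ∧ ∀ z ∈ q₁.support, z ≠ w → z ∉ S
  | _, _, nil, hy => ⟨_, hy, nil, nil, rfl, by simp⟩
  | x, _, cons h p, hy => by
    by_cases hx : x ∈ S
    · exact ⟨x, hx, nil, cons h p, rfl, by simp⟩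
    · obtain ⟨w, hw, q₁, q₂, rfl, hq₁⟩ := exists_eq_append_of_end_mem p hy
      refine ⟨w, hw, cons h q₁, q₂, rfl, fun z hz hzw => ?_⟩
      rcases (mem_support_iff _).mp hz with rfl | hz
      · exact hx
      · exact hq₁ z hz hzw

end SimpleGraph.Walk

open SimpleGraph.Walk in
theorem stmt2_general (G : SimpleGraph V) (π : LinearOrder V) (r : ℕ)
    (u v : V) (huv : π.lt u v) (p : G.Walk u v) (hp : p.IsPath) (hlen : p.length ≤ r) :
    ∃ w ∈ p.support, w ∈ SReach G π r v ∧ w ≠ v := by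
  let _ := π
  -- Walk back from `v` along `p` and stop at the first vertex below `v`.
  obtain ⟨w, hwv, q₁, q₂, hsplit, hq₁⟩ :=
    exists_eq_append_of_end_mem (S := {x | x < v}) p.reverse huv
  have hq₁_path : q₁.IsPath := (hsplit ▸ hp.reverse).of_append_left
  have hq₁_len : q₁.length ≤ r := by
    have := congrArg length hsplit
    rw [length_reverse, length_append] at this
    omega
  have hw_mem : w ∈ p.support := by
    rw [← List.mem_reverse, ← support_reverse, hsplit, mem_support_append_iff]
    exact Or.inl q₁.end_mem_support
  refine ⟨w, hw_mem, ⟨hwv.le, q₁, hq₁_path, hq₁_len, fun z hz hzv hzw => ?_⟩, hwv.ne⟩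
  exact lt_of_le_of_ne (not_lt.mp (hq₁ z hz hzw)) hzv.symm

theorem stmt2 (G : SimpleGraph V) (π : LinearOrder V) (r : ℕ) (hr : 0 < r)
    (u v : V) (huv : π.lt u v) (p : G.Walk u v) (hp : p.IsPath) (hlen : p.length ≤ r) :
    ∃ w ∈ p.support, w ∈ SReach G π r v ∧ w ≠ v :=
  stmt2_general G π r u v huv p hp hlen
end

section
/- For every graph G and positive integer r, wcol_r(G) ≤ col_r(G)^r. -/
variable {V : Type*}

/-- Weak r-reachability. -/
def WReach (G : SimpleGraph V) (π : LinearOrder V) (r : ℕ) (v : V) : Set V :=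
  letI := π
  {u | u ≤ v ∧ ∃ p : G.Walk v u, p.IsPath ∧ p.length ≤ r ∧
      ∀ w ∈ p.support, w ≠ v → w ≠ u → u < w}

noncomputable def scol [Fintype V] (G : SimpleGraph V) (r : ℕ) : ℕ :=
  sInf {k | ∃ π : LinearOrder V, ∀ v, (SReach G π r v).ncard ≤ k}

noncomputable def wcol [Fintype V] (G : SimpleGraph V) (r : ℕ) : ℕ :=
  sInf {k | ∃ π : LinearOrder V, ∀ v, (WReach G π r v).ncard ≤ k}

/-!
Fix an order `π` attaining `scol G r`. If `u` is weakly `r`-reachable from `v` along a path `P`,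
let `x` be the `π`-least vertex of `P` other than `u`. Either `x = v`, and `u` is strongly
reachable from `v`, or `P` splits at `x` into two shorter weak-reachability paths `v → x` and
`x → u`. Hence `u` is reached from `v` by at most `r` consecutive strong `r`-reachability steps,
and there are at most `scol G r ^ r` such vertices.
-/

open SimpleGraph

theorem Set.ncard_biUnion_le_ncard_mul {α β : Type*} {s : Set α} (hs : s.Finite)
    (f : α → Set β) {c : ℕ} (hc : ∀ x ∈ s, (f x).ncard ≤ c) :
    (⋃ x ∈ s, f x).ncard ≤ s.ncard * c :=
  calc (⋃ x ∈ s, f x).ncard = (⋃ x ∈ hs.toFinset, f x).ncard := by simp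
    _ ≤ ∑ x ∈ hs.toFinset, (f x).ncard := Finset.set_ncard_biUnion_le _ _
    _ ≤ hs.toFinset.card • c :=
      Finset.sum_le_card_nsmul _ _ _ fun x hx => hc x (by simpa using hx)
    _ = s.ncard * c := by rw [smul_eq_mul, Set.ncard_eq_toFinset_card s hs]

theorem SimpleGraph.Walk.IsPath.start_notMem_support_dropUntil [DecidableEq V]
    {G : SimpleGraph V} {u v w : V} {p : G.Walk u v} (hp : p.IsPath) (hw : w ∈ p.support)
    (h : u ≠ w) : u ∉ (p.dropUntil w hw).support := by
  intro hu
  have hnd := hp.support_nodup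
  rw [← p.take_spec hw, Walk.support_append] at hnd
  rw [← Walk.cons_tail_support] at hu
  rcases List.mem_cons.mp hu with rfl | hu_tail
  · exact h rfl
  · exact List.disjoint_of_nodup_append hnd (p.takeUntil w hw).start_mem_support hu_tail

theorem exists_linearOrder_ncard_SReach_le_scol [Fintype V] (G : SimpleGraph V) (r : ℕ) :
    ∃ π : LinearOrder V, ∀ v, (SReach G π r v).ncard ≤ scol G r :=
  Nat.sInf_mem (s := {k | ∃ π : LinearOrder V, ∀ v, (SReach G π r v).ncard ≤ k})
    ⟨Nat.card V, LinearOrder.lift' _ (Fintype.equivFin V).injective,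
      fun _ => Set.ncard_le_card _⟩

section Reachability

variable [π : LinearOrder V] (G : SimpleGraph V)

theorem self_mem_SReach (r : ℕ) (v : V) : v ∈ SReach G π r v :=
  ⟨le_rfl, .nil, .nil, Nat.zero_le r, fun w hw hwv _ => absurd (by simpa using hw) hwv⟩

theorem SReach_mono {m n : ℕ} (h : m ≤ n) (v : V) : SReach G π m v ⊆ SReach G π n v :=
  fun _ ⟨huv, p, hp, hlen, hint⟩ => ⟨huv, p, hp, hlen.trans h, hint⟩

theorem mem_SReach_or_exists_of_mem_WReach {n : ℕ} {v u : V} (hu : u ∈ WReach G π n v) :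
    u ∈ SReach G π n v ∨ ∃ x a b, 0 < a ∧ 0 < b ∧ a + b ≤ n ∧
      x ∈ WReach G π a v ∧ u ∈ WReach G π b x := by
  classical
  obtain ⟨huv, p, hp, hlen, hint⟩ := hu
  obtain rfl | hne := eq_or_ne u v
  · exact .inl (self_mem_SReach G n u)
  set s := p.support.toFinset.erase u
  have hvs : v ∈ s := by simp [s, hne.symm]
  set x := s.min' ⟨v, hvs⟩
  have hx_min : ∀ w ∈ p.support, w ≠ u → x ≤ w :=
    fun w hw hwu => s.min'_le w (by simp [s, hw, hwu])
  have hxu : x ≠ u := (Finset.mem_erase.mp (s.min'_mem _)).1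
  have hxp : x ∈ p.support := by simpa using (Finset.mem_erase.mp (s.min'_mem _)).2
  by_cases hxv : x = v
  · refine .inl ⟨huv, p, hp, hlen, fun w hw hwv hwu => ?_⟩
    exact lt_of_le_of_ne (hxv ▸ hx_min w hw hwu) (Ne.symm hwv)
  right
  have hsplit := congrArg Walk.length (p.take_spec hxp)
  rw [Walk.length_append] at hsplit
  refine ⟨x, _, _, ?_, ?_, hsplit ▸ hlen, ⟨?_, _, hp.takeUntil hxp, le_rfl, ?_⟩,
    ⟨?_, _, hp.dropUntil hxp, le_rfl, ?_⟩⟩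
  · exact Nat.pos_of_ne_zero fun h => hxv (Walk.eq_of_length_eq_zero h).symm
  · exact Nat.pos_of_ne_zero fun h => hxu (Walk.eq_of_length_eq_zero h)
  · exact hx_min v p.start_mem_support hne.symm
  · intro w hw _ hwx
    have hwu : w ≠ u := by
      rintro rfl
      exact Walk.endpoint_notMem_support_takeUntil hp hxp (Ne.symm hxu) hw
    exact lt_of_le_of_ne (hx_min w (p.support_takeUntil_subset_support hxp hw) hwu) (Ne.symm hwx)
  · exact (hint x hxp hxv hxu).le
  · intro w hw _ hwu
    have hwv : w ≠ v := by
      rintro rfl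
      exact hp.start_notMem_support_dropUntil hxp (Ne.symm hxv) hw
    exact hint w (p.support_dropUntil_subset_support hxp hw) hwv hwu

variable (r : ℕ)

def iterSReach : ℕ → V → Set V
  | 0, v => {v}
  | n + 1, v => ⋃ x ∈ iterSReach n v, SReach G π r x

theorem mem_iterSReach_add {a b : ℕ} {v x u : V} (hx : x ∈ iterSReach G r a v)
    (hu : u ∈ iterSReach G r b x) : u ∈ iterSReach G r (a + b) v := by
  induction b generalizing u with
  | zero => cases hu; exact hx
  | succ b ih =>
    obtain ⟨y, hy, hu⟩ := Set.mem_iUnion₂.mp hu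
    exact Set.mem_biUnion (ih hy) hu

theorem self_mem_iterSReach (n : ℕ) (v : V) : v ∈ iterSReach G r n v := by
  induction n with
  | zero => rfl
  | succ n ih => exact Set.mem_biUnion ih (self_mem_SReach G r v)

theorem iterSReach_mono {m n : ℕ} (h : m ≤ n) (v : V) :
    iterSReach G r m v ⊆ iterSReach G r n v := by
  obtain ⟨k, rfl⟩ := Nat.exists_eq_add_of_le h
  exact fun u hu => mem_iterSReach_add G r hu (self_mem_iterSReach G r k u)

theorem SReach_subset_iterSReach {n : ℕ} (hn : n ≤ r) (v : V) :
    SReach G π n v ⊆ iterSReach G r n v := by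
  rintro u hu
  cases n with
  | zero =>
    obtain ⟨-, p, -, hlen, -⟩ := hu
    rw [← Walk.eq_of_length_eq_zero (Nat.le_zero.mp hlen)]
    exact self_mem_iterSReach G r 0 v
  | succ n =>
    have hu₁ : u ∈ iterSReach G r 1 v :=
      Set.mem_biUnion (self_mem_iterSReach G r 0 v) (SReach_mono G hn v hu)
    exact iterSReach_mono G r (Nat.succ_le_succ (Nat.zero_le n)) v hu₁

theorem WReach_subset_iterSReach {n : ℕ} (hn : n ≤ r) (v : V) :
    WReach G π n v ⊆ iterSReach G r n v := by
  induction n using Nat.strong_induction_on generalizing v with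
  | _ n ih =>
  intro u hu
  rcases mem_SReach_or_exists_of_mem_WReach G hu with hS | ⟨x, a, b, ha, hb, hab, hx, hux⟩
  · exact SReach_subset_iterSReach G r hn v hS
  · have hx' := ih a (by omega) (by omega) v hx
    have hu' := ih b (by omega) (by omega) x hux
    exact iterSReach_mono G r hab v (mem_iterSReach_add G r hx' hu')

theorem ncard_iterSReach_le [Finite V] {c : ℕ} (hc : ∀ x, (SReach G π r x).ncard ≤ c)
    (n : ℕ) (v : V) : (iterSReach G r n v).ncard ≤ c ^ n := by
  induction n with
  | zero => simp [iterSReach]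
  | succ n ih =>
    calc (iterSReach G r (n + 1) v).ncard ≤ (iterSReach G r n v).ncard * c :=
          Set.ncard_biUnion_le_ncard_mul (Set.toFinite _) _ fun x _ => hc x
      _ ≤ c ^ n * c := Nat.mul_le_mul_right c ih
      _ = c ^ (n + 1) := (pow_succ c n).symm

end Reachability

theorem stmt5_general [Fintype V] (G : SimpleGraph V) (r : ℕ) :
    wcol G r ≤ (scol G r) ^ r := by
  obtain ⟨π, hπ⟩ := exists_linearOrder_ncard_SReach_le_scol G r
  let := π
  refine Nat.sInf_le ⟨π, fun v => ?_⟩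
  calc (WReach G π r v).ncard ≤ (iterSReach G r r v).ncard :=
        Set.ncard_le_ncard (WReach_subset_iterSReach G r le_rfl v) (Set.toFinite _)
    _ ≤ scol G r ^ r := ncard_iterSReach_le G r hπ r v

theorem stmt5 [Fintype V] (G : SimpleGraph V) (r : ℕ) (hr : 0 < r) :
    wcol G r ≤ (scol G r) ^ r :=
  stmt5_general G r
end

section
/- For every graph G and positive integer r, ∇_r(G) ≤ wcol_{2r+1}(G): every depth-r minor H of G satisfies |E(H)|/|V(H)| ≤ wcol_{2r+1}(G). -/
variable {V : Type*} {W : Type*}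

/-- `M` is a depth-`r` minor model of `H` in `G`: branch sets are pairwise disjoint,
each has radius at most `r` (inside itself), and edges of `H` are realized by edges
of `G` between the corresponding branch sets. -/
def IsDepthMinorModel (G : SimpleGraph V) (H : SimpleGraph W) (r : ℕ)
    (M : W → Set V) : Prop :=
  (∀ w, ∃ c ∈ M w, ∀ x ∈ M w, ∃ p : G.Walk c x, p.length ≤ r ∧ ∀ y ∈ p.support, y ∈ M w) ∧
  (∀ w w', w ≠ w' → Disjoint (M w) (M w')) ∧
  (∀ w w', H.Adj w w' → ∃ a ∈ M w, ∃ b ∈ M w', G.Adj a b)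

/-- If there is a walk from `x` to `u` of length at most `s` all of whose vertices are
`≥ u`, then `u` is weakly `s`-reachable from `x`. -/
lemma mem_WReach_of_walk (G : SimpleGraph V) (π : LinearOrder V) (s : ℕ) {x u : V}
    (Q : G.Walk x u) (hlen : Q.length ≤ s)
    (hmin : ∀ y ∈ Q.support, π.le u y) :
    u ∈ WReach G π s x := by
  letI := π
  refine ⟨hmin x Q.start_mem_support, Q.bypass, Q.bypass_isPath,
    le_trans Q.length_bypass_le hlen, ?_⟩
  intro y hy _ hyu
  exact lt_of_le_of_ne (hmin y (Q.support_bypass_subset hy)) (Ne.symm hyu)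

/-- Key charging lemma: every realized edge `{w, w'}` yields a vertex `u` weakly
`(2r+1)`-reachable from the center of one endpoint, lying in the branch set of the
other endpoint. -/
lemma edge_key (G : SimpleGraph V) (π : LinearOrder V) (r : ℕ) (M : W → Set V)
    (c : W → V)
    (hp : ∀ w, ∀ x ∈ M w, ∃ p : G.Walk (c w) x, p.length ≤ r ∧ ∀ y ∈ p.support, y ∈ M w)
    {w w' : W} {a b : V} (ha : a ∈ M w) (hb : b ∈ M w') (hab : G.Adj a b) :
    ∃ t u, u ∈ WReach G π (2 * r + 1) (c t) ∧ ∃ s', u ∈ M s' ∧ s(w, w') = s(s', t) := by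
  classical
  letI := π
  obtain ⟨p1, hp1len, hp1sup⟩ := hp w a ha
  obtain ⟨p2, hp2len, hp2sup⟩ := hp w' b hb
  let Q : G.Walk (c w) (c w') := p1.append (SimpleGraph.Walk.cons hab p2.reverse)
  have hQlen : Q.length ≤ 2 * r + 1 := by
    simp only [Q, SimpleGraph.Walk.length_append, SimpleGraph.Walk.length_cons,
      SimpleGraph.Walk.length_reverse]
    omega
  have hQsup : ∀ y ∈ Q.support, y ∈ M w ∪ M w' := by
    intro y hy
    rw [SimpleGraph.Walk.mem_support_append_iff] at hy
    rcases hy with hy | hy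
    · exact Or.inl (hp1sup y hy)
    · rw [SimpleGraph.Walk.support_cons, List.mem_cons] at hy
      rcases hy with rfl | hy
      · exact Or.inl ha
      · rw [SimpleGraph.Walk.support_reverse, List.mem_reverse] at hy
        exact Or.inr (hp2sup y hy)
  have hne : Q.support.toFinset.Nonempty :=
    ⟨c w, List.mem_toFinset.mpr Q.start_mem_support⟩
  set u : V := Q.support.toFinset.min' hne with hu_def
  have hum : u ∈ Q.support := List.mem_toFinset.mp (Q.support.toFinset.min'_mem hne)
  have hmin : ∀ y ∈ Q.support, u ≤ y := fun y hy =>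
    Q.support.toFinset.min'_le y (List.mem_toFinset.mpr hy)
  by_cases hu : u ∈ M w
  · refine ⟨w', u, ?_, w, hu, rfl⟩
    have hu' : u ∈ Q.reverse.support := by
      rw [SimpleGraph.Walk.support_reverse]; exact List.mem_reverse.mpr hum
    refine mem_WReach_of_walk G π (2 * r + 1) (Q.reverse.takeUntil u hu')
      (le_trans (SimpleGraph.Walk.length_takeUntil_le _ hu')
        (by rwa [SimpleGraph.Walk.length_reverse])) ?_
    intro y hy
    have hy' := SimpleGraph.Walk.support_takeUntil_subset _ hu' hy
    rw [SimpleGraph.Walk.support_reverse, List.mem_reverse] at hy'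
    exact hmin y hy'
  · have hu2 : u ∈ M w' := (hQsup u hum).resolve_left hu
    refine ⟨w, u, ?_, w', hu2, Sym2.eq_swap⟩
    exact mem_WReach_of_walk G π (2 * r + 1) (Q.takeUntil u hum)
      (le_trans (SimpleGraph.Walk.length_takeUntil_le _ hum) hQlen)
      (fun y hy => hmin y (SimpleGraph.Walk.support_takeUntil_subset _ hum hy))

theorem stmt6 [Fintype V] [Fintype W] (G : SimpleGraph V) (H : SimpleGraph W)
    (r : ℕ) (hr : 0 < r) (M : W → Set V) (hM : IsDepthMinorModel G H r M) :
    (H.edgeSet.ncard : ℝ) / (Fintype.card W : ℝ) ≤ (wcol G (2 * r + 1) : ℝ) := by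
  classical
  obtain ⟨hcs, hdisj, hadj⟩ := hM
  choose c hc hp using hcs
  -- pick an order achieving `wcol`
  have hne : {k | ∃ π : LinearOrder V, ∀ v, (WReach G π (2 * r + 1) v).ncard ≤ k}.Nonempty := by
    refine ⟨Fintype.card V, LinearOrder.lift' (Fintype.equivFin V)
      (Fintype.equivFin V).injective, fun v => ?_⟩
    calc (WReach G _ (2 * r + 1) v).ncard ≤ (Set.univ : Set V).ncard :=
          Set.ncard_le_ncard (Set.subset_univ _) Set.finite_univ
      _ = Fintype.card V := by rw [Set.ncard_univ, Nat.card_eq_fintype_card]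
  have hmem : wcol G (2 * r + 1) ∈
      {k | ∃ π : LinearOrder V, ∀ v, (WReach G π (2 * r + 1) v).ncard ≤ k} :=
    Nat.sInf_mem hne
  obtain ⟨π, hπ⟩ := hmem
  -- the key counting inequality
  have key : H.edgeSet.ncard ≤ Fintype.card W * wcol G (2 * r + 1) := by
    have hex : ∀ e ∈ H.edgeSet, ∃ t u, u ∈ WReach G π (2 * r + 1) (c t) ∧
        ∃ s', u ∈ M s' ∧ e = s(s', t) := by
      intro e
      induction e using Sym2.ind with
      | _ w w' =>
        intro he
        rw [SimpleGraph.mem_edgeSet] at he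
        obtain ⟨a, ha, b, hb, hab⟩ := hadj w w' he
        exact edge_key G π r M c hp ha hb hab
    rcases Set.eq_empty_or_nonempty H.edgeSet with hE | ⟨e0, he0⟩
    · simp [hE]
    choose t u h1 h2 using hex
    let F : Sym2 W → W × V := fun e =>
      if he : e ∈ H.edgeSet then (t e he, u e he) else (t e0 he0, u e0 he0)
    let T : Set (W × V) := {p | p.2 ∈ WReach G π (2 * r + 1) (c p.1)}
    have hmaps : ∀ e ∈ H.edgeSet, F e ∈ T := by
      intro e he
      simp only [F, dif_pos he]
      exact h1 e he
    have hinj : Set.InjOn F H.edgeSet := by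
      intro e1 he1 e2 he2 hF
      simp only [F, dif_pos he1, dif_pos he2, Prod.mk.injEq] at hF
      obtain ⟨s1, hs1, he1'⟩ := h2 e1 he1
      obtain ⟨s2, hs2, he2'⟩ := h2 e2 he2
      have hs : s1 = s2 := by
        by_contra hss
        exact Set.disjoint_left.mp (hdisj s1 s2 hss) hs1 (hF.2 ▸ hs2)
      rw [he1', he2', hs, hF.1]
    have hTcard : T.ncard ≤ Fintype.card W * wcol G (2 * r + 1) := by
      have hsub : T ⊆ ↑(Finset.univ.biUnion (fun t' : W =>
          ((WReach G π (2 * r + 1) (c t')).toFinite.toFinset).image (Prod.mk t'))) := by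
        rintro ⟨t', v⟩ hv
        simp only [Finset.coe_biUnion, Finset.coe_univ, Set.mem_iUnion, Finset.coe_image,
          Set.Finite.coe_toFinset, Set.mem_image]
        exact ⟨t', trivial, v, hv, rfl⟩
      calc T.ncard ≤ (↑(Finset.univ.biUnion (fun t' : W =>
            ((WReach G π (2 * r + 1) (c t')).toFinite.toFinset).image (Prod.mk t'))) :
              Set (W × V)).ncard :=
            Set.ncard_le_ncard hsub (Set.toFinite _)
        _ = (Finset.univ.biUnion (fun t' : W =>
            ((WReach G π (2 * r + 1) (c t')).toFinite.toFinset).image (Prod.mk t'))).card :=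
            Set.ncard_coe_finset _
        _ ≤ ∑ t' : W, (((WReach G π (2 * r + 1) (c t')).toFinite.toFinset).image
              (Prod.mk t')).card := Finset.card_biUnion_le
        _ ≤ ∑ t' : W, ((WReach G π (2 * r + 1) (c t')).toFinite.toFinset).card :=
            Finset.sum_le_sum (fun _ _ => Finset.card_image_le)
        _ ≤ ∑ _t' : W, wcol G (2 * r + 1) := by
            refine Finset.sum_le_sum (fun t' _ => ?_)
            rw [← Set.ncard_eq_toFinset_card _ (WReach G π (2 * r + 1) (c t')).toFinite]
            exact hπ (c t')
        _ = Fintype.card W * wcol G (2 * r + 1) := by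
            rw [Finset.sum_const, Finset.card_univ, smul_eq_mul]
    calc H.edgeSet.ncard ≤ T.ncard :=
          Set.ncard_le_ncard_of_injOn F hmaps hinj (Set.toFinite T)
      _ ≤ Fintype.card W * wcol G (2 * r + 1) := hTcard
  -- conclude
  rcases Nat.eq_zero_or_pos (Fintype.card W) with hW | hW
  · have : IsEmpty W := Fintype.card_eq_zero_iff.mp hW
    have hE : H.edgeSet = ∅ := by
      ext e
      induction e using Sym2.ind with
      | _ w w' => exact this.elim w
    simp [hE, hW]
  · rw [div_le_iff₀ (by exact_mod_cast hW)]
    calc (H.edgeSet.ncard : ℝ) ≤ (Fintype.card W * wcol G (2 * r + 1) : ℕ) := by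
          exact_mod_cast key
      _ = (wcol G (2 * r + 1) : ℝ) * (Fintype.card W : ℝ) := by push_cast; ring
end

section
/- If a graph G contains a (k,r)-fan set, then adm_r(G) ≥ k; conversely, adm_r(G) equals the largest k such that G contains a (k,r)-fan set. -/
/-!
Lower bound: fix an order and let `a` be the largest vertex of a `(k,r)`-fan set `A`. Its fan
into `A` ends in the down-set of `a`, which contains `A`; cutting each path at the first vertex of
the down-set it meets keeps the paths disjoint and gives a fan of order `k` at `a`.

Upper bound: if `s` is the largest order of a fan set, no nonempty set is an `(s+1,r)`-fan set, so
every nonempty set has a vertex whose fans into it have order at most `s`. Removing such a vertex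
and placing it last, repeatedly, yields an order witnessing `adm G r ≤ s`.
-/

variable {V : Type*}

/-- A depth-`r` `v`–`A` fan of order `k`. -/
def IsFan (G : SimpleGraph V) (r : ℕ) (v : V) (A : Set V) (k : ℕ) : Prop :=
  ∃ (e : Fin k → V) (P : ∀ i, G.Walk v (e i)),
    Function.Injective e ∧
    (∀ i, e i ∈ A ∧ (P i).IsPath ∧ (P i).length ≤ r ∧
      ∀ w ∈ (P i).support, w ≠ v → w ≠ e i → w ∉ A) ∧
    (∀ i j, i ≠ j → ∀ w, w ∈ (P i).support → w ∈ (P j).support → w = v)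

noncomputable def adm [Fintype V] (G : SimpleGraph V) (r : ℕ) : ℕ :=
  sInf {k | ∃ π : LinearOrder V, ∀ v m, IsFan G r v {u | π.le u v} m → m ≤ k}

/-- A `(k,r)`-fan set: every element of `A` admits a depth-`r` fan of order `k` into `A`. -/
def IsFanSet (G : SimpleGraph V) (r k : ℕ) (A : Set V) : Prop :=
  ∀ a ∈ A, IsFan G r a A k

open SimpleGraph

lemma SimpleGraph.Walk.IsPath.exists_truncation_at_first_mem {G : SimpleGraph V} (B : Set V)
    {a b : V} {P : G.Walk a b} (hP : P.IsPath) (hb : b ∈ B) :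
    ∃ (c : V) (Q : G.Walk a c), c ∈ B ∧ Q.IsPath ∧ Q.length ≤ P.length ∧
      Q.support ⊆ P.support ∧ (∀ w ∈ Q.support, w ≠ a → w ≠ c → w ∉ B) ∧ (c = a → b = a) := by
  induction P with
  | nil => exact ⟨_, .nil, hb, .nil, le_rfl, by simp, by simp, fun _ => rfl⟩
  | @cons u v' b h p ih =>
    obtain ⟨hp, hu⟩ := (Walk.cons_isPath_iff h p).1 hP
    by_cases hv' : v' ∈ B
    · refine ⟨v', Adj.toWalk h, hv', Adj.isPath_toWalk h, by simp, ?_, ?_,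
        fun hv'u => absurd hv'u h.ne'⟩
      · simp [List.subset_def]
      · simp +contextual
    · obtain ⟨c, Q, hcB, hQ, hlen, hsub, hint, -⟩ := ih hp hb
      have hcu : c ≠ u := fun hcu => hu (hcu ▸ hsub Q.end_mem_support)
      refine ⟨c, .cons h Q, hcB, (Walk.cons_isPath_iff h Q).2 ⟨hQ, fun huQ => hu (hsub huQ)⟩,
        by simpa using hlen, by simpa using List.cons_subset_cons u hsub, ?_,
        fun hcu' => absurd hcu' hcu⟩
      intro w hw hwu hwc
      rcases List.mem_cons.1 (Walk.support_cons h Q ▸ hw) with rfl | hw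
      · exact absurd rfl hwu
      · by_cases hwv' : w = v'
        · exact hwv' ▸ hv'
        · exact hint w hw hwv' hwc

namespace IsFan

variable {G : SimpleGraph V} {r k : ℕ} {v : V} {A : Set V}

lemma of_le (h : IsFan G r v A k) {m : ℕ} (hm : m ≤ k) : IsFan G r v A m := by
  obtain ⟨e, P, he, hP, hdisj⟩ := h
  refine ⟨e ∘ Fin.castLE hm, fun i => P (Fin.castLE hm i), he.comp (Fin.castLE_injective hm),
    fun i => hP _, fun i j hij => hdisj _ _ ((Fin.castLE_injective hm).ne hij)⟩

lemma order_le_card [Fintype V] (h : IsFan G r v A k) : k ≤ Fintype.card V := by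
  obtain ⟨e, -, he, -⟩ := h
  simpa using Fintype.card_le_of_injective e he

lemma mono_set (h : IsFan G r v A k) {B : Set V} (hAB : A ⊆ B) : IsFan G r v B k := by
  obtain ⟨e, P, he, hP, hdisj⟩ := h
  choose c Q hcB hQ hlen hsub hint hcv using
    fun i => (hP i).2.1.exists_truncation_at_first_mem B (hAB (hP i).1)
  refine ⟨c, Q, fun i j hij => ?_, fun i => ⟨hcB i, hQ i, (hlen i).trans (hP i).2.2.1, hint i⟩,
    fun i j hij w hwi hwj => hdisj i j hij w (hsub i hwi) (hsub j hwj)⟩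
  by_contra hne
  -- distinct paths of the fan share only `v`, and only the trivial one stops at `v`
  have hci : c i = v :=
    hdisj i j hne _ (hsub i (Q i).end_mem_support) (hij ▸ hsub j (Q j).end_mem_support)
  exact hne (he ((hcv i hci).trans (hcv j (hij ▸ hci)).symm))

end IsFan

open Finset in
lemma Finset.exists_rank_of_forall_exists_mem (p : V → Set V → Prop)
    (hp : ∀ A : Set V, A.Nonempty → ∃ a ∈ A, p a A) (S : Finset V) :
    ∃ f : V → ℕ, Set.InjOn f S ∧ (∀ v ∈ S, f v < #S) ∧
      ∀ v ∈ S, p v {u | u ∈ S ∧ f u ≤ f v} := by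
  classical
  induction S using Finset.strongInduction with
  | H S ih =>
  rcases S.eq_empty_or_nonempty with rfl | hS
  · exact ⟨0, by simp, by simp, by simp⟩
  obtain ⟨a, ha, hpa⟩ := hp S (by simpa using hS)
  obtain ⟨f, hinj, hlt, hpf⟩ := ih (S.erase a) (erase_ssubset ha)
  have hcard : #(S.erase a) < #S := card_erase_lt_of_mem ha
  set g := Function.update f a #(S.erase a)
  have hg : ∀ v ∈ S.erase a, g v = f v := fun v hv => Function.update_of_ne (ne_of_mem_erase hv) ..
  have hglt : ∀ v ∈ S.erase a, g v < g a := fun v hv => by simpa [g, hg v hv] using hlt v hv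
  refine ⟨g, ?_, fun v hv => ?_, fun v hv => ?_⟩
  · rw [← insert_erase ha, coe_insert, Set.injOn_insert (by simp)]
    refine ⟨(hinj.congr fun v hv => (hg v hv).symm), ?_⟩
    rintro ⟨v, hv, hva⟩
    exact (hglt v hv).ne hva
  · by_cases hva : v = a
    · simpa [hva, g] using hcard
    · exact (hg v (mem_erase.2 ⟨hva, hv⟩)).symm ▸ (hlt v (mem_erase.2 ⟨hva, hv⟩)).trans hcard
  · by_cases hva : v = a
    · convert hpa using 1
      ext u
      refine ⟨fun hu => hu.1, fun hu => ⟨hu, ?_⟩⟩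
      by_cases hua : u = a
      · rw [hua, hva]
      · exact hva ▸ (hglt u (mem_erase.2 ⟨hua, hu⟩)).le
    · have hv' : v ∈ S.erase a := mem_erase.2 ⟨hva, hv⟩
      convert hpf v hv' using 1
      ext u
      by_cases hua : u = a
      · simp [hua, (hglt v hv').not_ge]
      · simp +contextual [hua, hg v hv', hg u, mem_erase]

lemma exists_linearOrder_of_forall_exists_mem [Fintype V] (p : V → Set V → Prop)
    (hp : ∀ A : Set V, A.Nonempty → ∃ a ∈ A, p a A) :
    ∃ π : LinearOrder V, ∀ v, p v {u | π.le u v} := by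
  obtain ⟨f, hinj, -, hpf⟩ := Finset.univ.exists_rank_of_forall_exists_mem p hp
  rw [Finset.coe_univ, Set.injOn_univ] at hinj
  refine ⟨LinearOrder.lift' f hinj, fun v => ?_⟩
  exact (by simpa only [Finset.mem_univ, true_and] using hpf v (Finset.mem_univ v) :
    p v {u | f u ≤ f v})

section

variable [Fintype V] {G : SimpleGraph V} {r : ℕ}

lemma exists_linearOrder_isFan_le_adm :
    ∃ π : LinearOrder V, ∀ v m, IsFan G r v {u | π.le u v} m → m ≤ adm G r :=
  Nat.sInf_mem (s := {k | ∃ π : LinearOrder V, ∀ v m, IsFan G r v {u | π.le u v} m → m ≤ k})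
    ⟨Fintype.card V, LinearOrder.lift' _ (Fintype.equivFin V).injective,
    fun _ _ h => h.order_le_card⟩

lemma le_adm_of_isFanSet {k : ℕ} {A : Set V} (hA : A.Nonempty) (hFS : IsFanSet G r k A) :
    k ≤ adm G r := by
  obtain ⟨π, hπ⟩ := exists_linearOrder_isFan_le_adm (G := G) (r := r)
  obtain ⟨a, ha, hmax⟩ := Set.exists_max_image A id A.toFinite hA
  exact hπ a k ((hFS a ha).mono_set hmax)

lemma adm_le_of_forall_exists_mem (c : ℕ)
    (h : ∀ A : Set V, A.Nonempty → ∃ a ∈ A, ∀ m, IsFan G r a A m → m ≤ c) : adm G r ≤ c :=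
  Nat.sInf_le (exists_linearOrder_of_forall_exists_mem _ h)

lemma bddAbove_setOf_isFanSet : BddAbove {k | ∃ A : Set V, A.Nonempty ∧ IsFanSet G r k A} :=
  ⟨Fintype.card V, fun _ ⟨_, ⟨a, ha⟩, hFS⟩ => (hFS a ha).order_le_card⟩

end

theorem stmt7_general [Fintype V] (G : SimpleGraph V) (r : ℕ) :
    (∀ k, (∃ A : Set V, A.Nonempty ∧ IsFanSet G r k A) → k ≤ adm G r) ∧
    adm G r = sSup {k | ∃ A : Set V, A.Nonempty ∧ IsFanSet G r k A} := by
  set S := {k | ∃ A : Set V, A.Nonempty ∧ IsFanSet G r k A}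
  have hS : ∀ k ∈ S, k ≤ adm G r := fun k ⟨A, hA, hFS⟩ => le_adm_of_isFanSet hA hFS
  refine ⟨hS, le_antisymm (adm_le_of_forall_exists_mem _ fun A hA => ?_) (csSup_le' hS)⟩
  have hnot : ¬ IsFanSet G r (sSup S + 1) A := fun h =>
    (le_csSup bddAbove_setOf_isFanSet ⟨A, hA, h⟩).not_gt (Nat.lt_succ_self _)
  obtain ⟨a, ha, hfan⟩ : ∃ a ∈ A, ¬ IsFan G r a A (sSup S + 1) := by
    simpa [IsFanSet] using hnot
  exact ⟨a, ha, fun m hm => not_lt.1 fun hlt => hfan (hm.of_le hlt)⟩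

theorem stmt7 [Fintype V] (G : SimpleGraph V) (r : ℕ) (hr : 0 < r) :
    (∀ k, (∃ A : Set V, A.Nonempty ∧ IsFanSet G r k A) → k ≤ adm G r) ∧
    adm G r = sSup {k | ∃ A : Set V, A.Nonempty ∧ IsFanSet G r k A} :=
  stmt7_general G r
end

section
/- For every graph G of treewidth at most k and every positive integer r, the weak r-coloring number of G satisfies wcol_r(G) ≤ C(r+k, k) (the binomial coefficient). -/
variable {V : Type*}

/-!
Root the tree decomposition at `z`, let `top v` be the bag closest to `z` containing `v`, and order
the vertices by the depth of `top v`. The vertices of `Bag (top v)` preceding `v` then form a set of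
at most `k` vertices containing every earlier neighbour of `v`, and any two of them share the bag
`top` of the later one: this is a perfect elimination ordering of a chordal supergraph of `G`.
Every vertex weakly `r`-reachable from `v` is then reached from `v` by a descending chain of at
most `r` steps through these sets. To count the endpoints of such chains from `x`, let `s` be the
smallest earlier neighbour of `x`: endpoints `≤ s` are reached from `s` in `r - 1` steps, and
endpoints `> s` are reached inside the later neighbourhood of `s`, where every set has lost `s`.
So the maximal number `f(r, k)` of endpoints satisfies `f(r, k) ≤ f(r - 1, k) + f(r, k - 1)`,
Pascal's recursion for `C(r + k, k)`.
-/

open Finset SimpleGraph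

section Elimination

variable {W : Type*}

/-- `S x` plays the role of the set of neighbours of `x` that precede it; the second condition
says that this set is a clique, i.e. the order is a perfect elimination ordering. -/
structure IsPerfectElimination [LinearOrder W] (S : W → Finset W) : Prop where
  lt_of_mem : ∀ {x y : W}, y ∈ S x → y < x
  mem_of_mem_of_lt : ∀ {x a b : W}, a ∈ S x → b ∈ S x → a < b → a ∈ S b

inductive DescendsTo (S : W → Finset W) : ℕ → W → W → Prop
  | refl (r : ℕ) (x : W) : DescendsTo S r x x
  | step {r : ℕ} {x y u : W} : y ∈ S x → DescendsTo S r y u → DescendsTo S (r + 1) x u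

namespace DescendsTo

variable {S : W → Finset W} {r r' : ℕ} {x y u : W}

theorem mono (h : DescendsTo S r x u) (hr : r ≤ r') : DescendsTo S r' x u := by
  induction h generalizing r' with
  | refl => exact refl _ _
  | step hy _ ih =>
    obtain ⟨r', rfl⟩ : ∃ m, r' = m + 1 := ⟨r' - 1, by omega⟩
    exact step hy (ih (by omega))

variable [LinearOrder W]

theorem le (hS : IsPerfectElimination S) (h : DescendsTo S r x u) : u ≤ x := by
  induction h with
  | refl => exact le_rfl
  | step hy _ ih => exact ih.trans (hS.lt_of_mem hy).le

theorem of_mem (hS : IsPerfectElimination S) (hx : x ∈ S y) (h : DescendsTo S r y u)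
    (hux : u ≤ x) : DescendsTo S r x u := by
  induction h generalizing x with
  | refl => exact absurd (hS.lt_of_mem hx) hux.not_gt
  | @step r y y' u hy' h ih =>
    rcases lt_trichotomy y' x with hlt | rfl | hgt
    · exact step (hS.mem_of_mem_of_lt hy' hx hlt) h
    · exact h.mono r.le_succ
    · exact (ih (hS.mem_of_mem_of_lt hx hy' hgt) hux).mono r.le_succ

end DescendsTo

variable [LinearOrder W] {S : W → Finset W}

theorem descendsTo_of_walk (hS : IsPerfectElimination S) {G : SimpleGraph W}
    (hG : ∀ a b, G.Adj a b → a < b → a ∈ S b) {x u : W} (p : G.Walk x u)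
    (hp : ∀ w ∈ p.support, u ≤ w) : DescendsTo S p.length x u := by
  induction p with
  | nil => exact .refl _ _
  | @cons x y u hxy q ih =>
    have hq := ih fun w hw => hp w (List.mem_cons_of_mem _ hw)
    rcases hxy.ne.lt_or_gt with hlt | hgt
    · exact (hq.of_mem hS (hG x y hxy hlt) (hp x (Walk.cons hxy q).start_mem_support)).mono
        q.length.le_succ
    · exact .step (hG y x hxy.symm hgt) hq

/-- The structure induced on the vertices above `s` that are later neighbours of `s`; the sets of
all other vertices are emptied, so that every set loses at least the element `s`. -/
def upperLink (S : W → Finset W) (s : W) (w : W) : Finset W :=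
  if s ∈ S w then (S w).filter (s < ·) else ∅

theorem IsPerfectElimination.upperLink (hS : IsPerfectElimination S) (s : W) :
    IsPerfectElimination (upperLink S s) where
  lt_of_mem {x y} hy := by
    unfold _root_.upperLink at hy
    split_ifs at hy
    · exact hS.lt_of_mem (mem_filter.1 hy).1
    · simp at hy
  mem_of_mem_of_lt {x a b} ha hb hab := by
    unfold _root_.upperLink at ha hb ⊢
    split_ifs at ha hb with hsx
    · rw [mem_filter] at ha hb
      rw [if_pos (hS.mem_of_mem_of_lt hsx hb.1 hb.2), mem_filter]
      exact ⟨hS.mem_of_mem_of_lt ha.1 hb.1 hab, ha.2⟩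
    · simp at ha

theorem card_upperLink_le {k : ℕ} (hk : ∀ w, #(S w) ≤ k + 1) (s w : W) :
    #(upperLink S s w) ≤ k := by
  unfold upperLink
  split_ifs with hs
  · exact Nat.le_of_lt_succ <|
      (card_lt_card (filter_ssubset.2 ⟨s, hs, lt_irrefl s⟩)).trans_le (hk w)
  · simp

theorem DescendsTo.upperLink (hS : IsPerfectElimination S) {r : ℕ} {s x u : W}
    (hs : s ∈ S x) (h : DescendsTo S r x u) (hsu : s < u) : DescendsTo (upperLink S s) r x u := by
  induction h with
  | refl => exact .refl _ _
  | step hy h ih =>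
    have hsy : s < _ := hsu.trans_le (h.le hS)
    refine .step ?_ (ih (hS.mem_of_mem_of_lt hs hy hsy) hsu)
    rw [_root_.upperLink, if_pos hs, mem_filter]
    exact ⟨hy, hsy⟩

theorem DescendsTo.of_le_min' (hS : IsPerfectElimination S) {r : ℕ} {x u : W}
    (hx : (S x).Nonempty) (h : DescendsTo S (r + 1) x u) (hu : u ≤ (S x).min' hx) :
    DescendsTo S r ((S x).min' hx) u := by
  cases h with
  | refl => exact absurd (hS.lt_of_mem ((S x).min'_mem hx)) hu.not_gt
  | step hy h =>
    rcases ((S x).min'_le _ hy).lt_or_eq with hlt | heq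
    · exact h.of_mem hS (hS.mem_of_mem_of_lt ((S x).min'_mem hx) hy hlt) hu
    · exact heq ▸ h

omit [LinearOrder W] in
theorem DescendsTo.eq_of_eq_empty {r : ℕ} {x u : W} (hx : S x = ∅) (h : DescendsTo S r x u) :
    u = x := by
  cases h with
  | refl => rfl
  | step hy => simp [hx] at hy

omit [LinearOrder W] in
theorem ncard_descendsTo_le_one [Finite W] {r : ℕ} {x : W} (hx : S x = ∅) :
    {u | DescendsTo S r x u}.ncard ≤ 1 :=
  (Set.ncard_le_one (Set.toFinite _)).2
    fun _ ha _ hb => (ha.eq_of_eq_empty hx).trans (hb.eq_of_eq_empty hx).symm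

theorem ncard_descendsTo_le_choose [Finite W] (hS : IsPerfectElimination S) {k : ℕ}
    (hk : ∀ w, #(S w) ≤ k) (r : ℕ) (x : W) :
    {u | DescendsTo S r x u}.ncard ≤ (r + k).choose k := by
  induction r generalizing k S x with
  | zero =>
    rw [Nat.zero_add, Nat.choose_self, Set.ncard_le_one (Set.toFinite _)]
    rintro a ⟨⟩ b ⟨⟩
    rfl
  | succ r ihr =>
    induction k generalizing S x with
    | zero =>
      rw [Nat.choose_zero_right]
      exact ncard_descendsTo_le_one (card_eq_zero.1 (Nat.le_zero.1 (hk x)))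
    | succ k ihk =>
      rcases (S x).eq_empty_or_nonempty with hx | hx
      · exact (ncard_descendsTo_le_one hx).trans (Nat.choose_pos (by omega))
      set s := (S x).min' hx
      have hsplit : {u | DescendsTo S (r + 1) x u} ⊆
          {u | DescendsTo S r s u} ∪ {u | DescendsTo (upperLink S s) (r + 1) x u} := by
        intro u hu
        rcases le_or_gt u s with hus | hsu
        · exact Or.inl (hu.of_le_min' hS hx hus)
        · exact Or.inr (hu.upperLink hS ((S x).min'_mem hx) hsu)
      calc {u | DescendsTo S (r + 1) x u}.ncard
          ≤ {u | DescendsTo S r s u}.ncard + {u | DescendsTo (upperLink S s) (r + 1) x u}.ncard :=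
            (Set.ncard_le_ncard hsplit (Set.toFinite _)).trans (Set.ncard_union_le _ _)
        _ ≤ (r + (k + 1)).choose (k + 1) + (r + 1 + k).choose k :=
            add_le_add (ihr hS hk s) (ihk (hS.upperLink s) (card_upperLink_le hk s) x)
        _ = (r + 1 + (k + 1)).choose (k + 1) := by
            rw [show r + 1 + (k + 1) = (r + k + 1) + 1 by ring, Nat.choose_succ_succ',
              show r + (k + 1) = r + k + 1 by ring, show r + 1 + k = r + k + 1 by ring, add_comm]

theorem ncard_wReach_le_choose [Finite W] (hS : IsPerfectElimination S) {k : ℕ}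
    (hk : ∀ w, #(S w) ≤ k) {G : SimpleGraph W} (hG : ∀ a b, G.Adj a b → a < b → a ∈ S b)
    (r : ℕ) (v : W) : (WReach G ‹_› r v).ncard ≤ (r + k).choose k := by
  refine le_trans (Set.ncard_le_ncard ?_ (Set.toFinite _)) (ncard_descendsTo_le_choose hS hk r v)
  rintro u ⟨huv, p, -, hpr, hp⟩
  refine (descendsTo_of_walk hS hG p fun w hw => ?_).mono hpr
  by_cases hwv : w = v
  · exact hwv ▸ huv
  by_cases hwu : w = u
  · exact hwu.ge
  exact (hp w hw hwv hwu).le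

end Elimination

theorem exists_linearOrder_lt_imp_le {W β : Type*} [Finite W] [LinearOrder β] (f : W → β) :
    ∃ _ : LinearOrder W, ∀ a b : W, a < b → f a ≤ f b := by
  obtain ⟨n, ⟨e⟩⟩ := Finite.exists_equiv_fin W
  let key : W → β ×ₗ Fin n := fun w => toLex (f w, e w)
  have hkey : Function.Injective key := fun a b h => e.injective (congrArg (·.2) h)
  exact ⟨LinearOrder.lift' key hkey,
    fun a b hab => (Prod.Lex.lt_iff.1 hab).elim le_of_lt fun h => h.1.le⟩

namespace SimpleGraph

variable {ι : Type*} {T : SimpleGraph ι}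

theorem Walk.dist_lt_of_mem_support_tail {y z w : ι} (R : T.Walk y z)
    (hR : R.length = T.dist y z) (hw : w ∈ R.support.tail) : T.dist w z < T.dist y z := by
  classical
  cases R with
  | nil => simp at hw
  | cons _ R =>
    rw [support_cons, List.tail_cons] at hw
    have := (T.dist_le (R.dropUntil w hw)).trans (R.length_dropUntil_le_length hw)
    rw [length_cons] at hR
    omega

theorem Walk.IsPath.append_of_length_eq_dist {x y z : ι} {Q : T.Walk x y} (hQ : Q.IsPath)
    {R : T.Walk y z} (hR : R.length = T.dist y z)
    (hQR : ∀ w ∈ Q.support, T.dist y z ≤ T.dist w z) :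
    (Q.append R).IsPath := by
  rw [isPath_def, support_append, List.nodup_append]
  refine ⟨hQ.support_nodup, (R.isPath_of_length_eq_dist hR).support_nodup.sublist
    (List.tail_sublist _), ?_⟩
  rintro w hwQ _ hwR rfl
  exact (hQR w hwQ).not_gt (R.dist_lt_of_mem_support_tail hR hwR)

end SimpleGraph

section TreeDecomposition

variable {ι : Type*} {T : SimpleGraph ι} {Bag : ι → Finset V}

theorem exists_isPath_append_through_top (hconn : T.Connected)
    (hsubtree : ∀ (v : V) (x y : ι), v ∈ Bag x → v ∈ Bag y →
      ∀ p : T.Walk x y, p.IsPath → ∀ z ∈ p.support, v ∈ Bag z)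
    {x a z : ι} {u : V} (hux : u ∈ Bag x) (hua : u ∈ Bag a)
    (ha : ∀ y, u ∈ Bag y → T.dist a z ≤ T.dist y z) :
    ∃ (Q : T.Walk x a) (R : T.Walk a z), R.length = T.dist a z ∧ (Q.append R).IsPath ∧
      ∀ w ∈ Q.support, u ∈ Bag w := by
  obtain ⟨Q, hQ⟩ := (hconn.preconnected x a).exists_isPath
  obtain ⟨R, hR⟩ := (hconn.preconnected a z).exists_walk_length_eq_dist
  have hQu := hsubtree u x a hux hua Q hQ
  exact ⟨Q, R, hR, hQ.append_of_length_eq_dist hR fun w hw => ha w (hQu w hw), hQu⟩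

/-- Both `a` and `b` lie on the unique path from `x` to the root `z`, and `b` lies between `x`
and `a`. -/
theorem mem_bag_of_dist_le (hconn : T.Connected) (hacyc : T.IsAcyclic)
    (hsubtree : ∀ (v : V) (x y : ι), v ∈ Bag x → v ∈ Bag y →
      ∀ p : T.Walk x y, p.IsPath → ∀ z ∈ p.support, v ∈ Bag z) {x a b z : ι} {u v : V}
    (hux : u ∈ Bag x) (hvx : v ∈ Bag x) (hua : u ∈ Bag a)
    (ha : ∀ y, u ∈ Bag y → T.dist a z ≤ T.dist y z) (hvb : v ∈ Bag b)
    (hb : ∀ y, v ∈ Bag y → T.dist b z ≤ T.dist y z) (hab : T.dist a z ≤ T.dist b z) :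
    u ∈ Bag b := by
  obtain ⟨Q, R, hR, hQR, hQ⟩ := exists_isPath_append_through_top hconn hsubtree hux hua ha
  obtain ⟨Q', R', -, hQR', -⟩ := exists_isPath_append_through_top hconn hsubtree hvx hvb hb
  have heq : Q.append R = Q'.append R' :=
    congrArg Subtype.val ((hacyc.subsingleton_path x z).elim ⟨_, hQR⟩ ⟨_, hQR'⟩)
  have hb_mem : b ∈ (Q.append R).support :=
    heq ▸ Walk.support_subset_support_append_left _ _ Q'.end_mem_support
  rw [Walk.support_append, List.mem_append] at hb_mem
  rcases hb_mem with hbQ | hbR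
  · exact hQ b hbQ
  · exact absurd hab (R.dist_lt_of_mem_support_tail hR hbR).not_ge

end TreeDecomposition

theorem stmt9_general [Fintype V] (G : SimpleGraph V) (k r : ℕ)
    (htw : ∃ (ι : Type) (_ : Fintype ι) (T : SimpleGraph ι) (Bag : ι → Finset V),
      T.Connected ∧ T.IsAcyclic ∧
      (∀ v : V, ∃ x, v ∈ Bag x) ∧
      (∀ (v : V) (x y : ι), v ∈ Bag x → v ∈ Bag y →
        ∀ p : T.Walk x y, p.IsPath → ∀ z ∈ p.support, v ∈ Bag z) ∧
      (∀ u v : V, G.Adj u v → ∃ x, u ∈ Bag x ∧ v ∈ Bag x) ∧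
      (∀ x, (Bag x).card ≤ k + 1)) :
    wcol G r ≤ (r + k).choose k := by
  obtain ⟨ι, -, T, Bag, hconn, hacyc, hcover, hsubtree, hedge, hcard⟩ := htw
  obtain ⟨z⟩ := hconn.nonempty
  have htop_ex (v : V) : ∃ a, v ∈ Bag a ∧ ∀ y, v ∈ Bag y → T.dist a z ≤ T.dist y z :=
    ⟨_, Function.argminOn_mem _ _ (hcover v),
      fun _ hy => Function.argminOn_le (T.dist · z) _ hy⟩
  choose top htop hmin using htop_ex
  obtain ⟨π, hπ⟩ := exists_linearOrder_lt_imp_le fun v => T.dist (top v) z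
  let S (v : V) : Finset V := (Bag (top v)).filter (· < v)
  have hshared {x : ι} {u v : V} (hux : u ∈ Bag x) (hvx : v ∈ Bag x) (huv : u < v) :
      u ∈ S v :=
    mem_filter.2 ⟨mem_bag_of_dist_le hconn hacyc hsubtree hux hvx (htop u) (hmin u) (htop v)
      (hmin v) (hπ u v huv), huv⟩
  have hS : IsPerfectElimination S :=
    ⟨fun hy => (mem_filter.1 hy).2,
      fun ha hb hab => hshared (mem_filter.1 ha).1 (mem_filter.1 hb).1 hab⟩
  have hk (v : V) : #(S v) ≤ k := Nat.le_of_lt_succ <|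
    (card_lt_card (filter_ssubset (p := (· < v)).2 ⟨v, htop v, lt_irrefl v⟩)).trans_le
      (hcard _)
  have hG (u v : V) (huv : G.Adj u v) (hlt : u < v) : u ∈ S v :=
    let ⟨_, hux, hvx⟩ := hedge u v huv
    hshared hux hvx hlt
  exact Nat.sInf_le ⟨π, ncard_wReach_le_choose hS hk hG r⟩

/-- If `G` has a tree decomposition of width at most `k` (bags of size at most `k+1`
arranged on a tree, each vertex appearing in a connected nonempty subtree and each
edge contained in a bag), then `wcol_r(G) ≤ (r+k choose k)`. -/
theorem stmt9 [Fintype V] (G : SimpleGraph V) (k r : ℕ) (hr : 0 < r)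
    (htw : ∃ (ι : Type) (_ : Fintype ι) (T : SimpleGraph ι) (Bag : ι → Finset V),
      T.Connected ∧ T.IsAcyclic ∧
      (∀ v : V, ∃ x, v ∈ Bag x) ∧
      (∀ (v : V) (x y : ι), v ∈ Bag x → v ∈ Bag y →
        ∀ p : T.Walk x y, p.IsPath → ∀ z ∈ p.support, v ∈ Bag z) ∧
      (∀ u v : V, G.Adj u v → ∃ x, u ∈ Bag x ∧ v ∈ Bag x) ∧
      (∀ x, (Bag x).card ≤ k + 1)) :
    wcol G r ≤ (r + k).choose k :=
  stmt9_general G k r htw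
end

section
/- Let G be a graph admitting a connected partition (V_1,...,V_ℓ) of width k that is f-flat. Then for every positive integer r, the strong r-coloring number satisfies col_r(G) ≤ (k+1)·f(r). -/
/-!
Order `V` by part index, breaking ties arbitrarily. If `u` is strongly `r`-reachable from `v`
along a path `p`, then every vertex of `p` other than `u` lies in a part no earlier than that of
`v`, while `u` lies in a part `j` no later than that of `v`. Hence `p` avoids the parts before `j`,
so `u` is one of at most `f r` vertices of part `j`; and either `j` is the part of `v`, or
contracting `p` yields a path in `Q` from the part of `v` to `j` through later parts, i.e. `j` is
one of at most `k` back-neighbours in the fill-in graph.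
-/

variable {V : Type*}

lemma Set.ncard_le_ncard_mul_of_subset_biUnion {α ι : Type*} [Finite α] {s : Set α} {t : Set ι}
    (ht : t.Finite) {A : ι → Set α} {m : ℕ} (hs : s ⊆ ⋃ i ∈ t, A i)
    (hA : ∀ i ∈ t, (A i).ncard ≤ m) : s.ncard ≤ t.ncard * m :=
  calc s.ncard ≤ (⋃ i ∈ ht.toFinset, A i).ncard := ncard_le_ncard (by simpa using hs)
    _ ≤ ∑ i ∈ ht.toFinset, (A i).ncard := Finset.set_ncard_biUnion_le _ _
    _ ≤ ht.toFinset.card * m := Finset.sum_le_card_nsmul _ _ _ (by simpa using hA)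
    _ = t.ncard * m := by rw [ncard_eq_toFinset_card _ ht]

lemma exists_index_of_cover_of_disjoint {ι : Type*} (P : ι → Set V)
    (hcover : ∀ v, ∃ i, v ∈ P i) (hdisj : ∀ i j, i ≠ j → Disjoint (P i) (P j)) :
    ∃ idx : V → ι, ∀ v i, v ∈ P i ↔ idx v = i := by
  choose idx hidx using hcover
  refine ⟨idx, fun v i => ⟨fun hv => ?_, fun h => h ▸ hidx v⟩⟩
  by_contra h
  exact Set.disjoint_left.1 (hdisj _ _ h) (hidx v) hv

/-- Sort by `φ`, breaking ties through `V ↪ Cardinal`. -/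
lemma exists_linearOrder_monotone {ι : Type*} [LinearOrder ι] (φ : V → ι) :
    ∃ π : LinearOrder V, letI := π; Monotone φ := by
  let key : V → ι ×ₗ Cardinal := fun v => toLex (φ v, embeddingToCardinal v)
  have hkey : key.Injective := fun a b h =>
    embeddingToCardinal.injective (congrArg (fun x => (ofLex x).2) h)
  exact ⟨LinearOrder.lift' key hkey, fun a b hab => Prod.Lex.monotone_fst _ _ hab⟩

namespace SimpleGraph

variable {ι : Type*}

lemma Walk.exists_walk_support_subset_map {W : Type*} {G : SimpleGraph V} {H : SimpleGraph W}
    (φ : V → W) (hφ : ∀ a b, G.Adj a b → φ a ≠ φ b → H.Adj (φ a) (φ b)) {a b : V}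
    (p : G.Walk a b) : ∃ q : H.Walk (φ a) (φ b), q.support ⊆ p.support.map φ := by
  induction p with
  | nil => exact ⟨.nil, by simp⟩
  | @cons a c b hac p ih =>
    obtain ⟨q, hq⟩ := ih
    by_cases hφac : φ a = φ c
    · exact ⟨q.copy hφac.symm rfl,
        by simpa using List.Subset.trans hq (List.subset_cons_self _ _)⟩
    · refine ⟨.cons (hφ a c hac hφac) q, ?_⟩
      simpa using List.cons_subset_cons _ hq

/-- The back-neighbours of `i` in the fill-in graph of `Q` along the order of `ι`. -/
def fillInBackNeighborSet [LinearOrder ι] (Q : SimpleGraph ι) (i : ι) : Set ι :=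
  {j | j < i ∧ ∃ q : Q.Walk i j, q.IsPath ∧ ∀ x ∈ q.support, x ≠ j → i ≤ x}

/-- `P i` ∩ the `r`-ball around `v` in `G` minus the parts before `P i`. -/
def partBall [LinearOrder ι] (G : SimpleGraph V) (P : ι → Set V) (r : ℕ) (i : ι) (v : V) :
    Set V :=
  {w | w ∈ P i ∧ ∃ p : G.Walk v w, p.length ≤ r ∧ ∀ x ∈ p.support, ∀ j, j < i → x ∉ P j}

theorem sReach_subset_biUnion_partBall [LinearOrder V] [LinearOrder ι] {G : SimpleGraph V}
    {Q : SimpleGraph ι} {P : ι → Set V} {idx : V → ι} (hP : ∀ v i, v ∈ P i ↔ idx v = i)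
    (hmono : Monotone idx) (hQ : ∀ a b, G.Adj a b → idx a ≠ idx b → Q.Adj (idx a) (idx b))
    (r : ℕ) (v : V) :
    SReach G ‹_› r v ⊆
      ⋃ j ∈ insert (idx v) (Q.fillInBackNeighborSet (idx v)), G.partBall P r j v := by
  rintro u ⟨huv, p, -, hlen, hlater⟩
  have hidx_support : ∀ x ∈ p.support, x ≠ u → idx v ≤ idx x := by
    intro x hx hxu
    rcases eq_or_ne x v with rfl | hxv
    · exact le_rfl
    · exact hmono (hlater x hx hxv hxu).le
  have hu : u ∈ G.partBall P r (idx u) v := by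
    refine ⟨(hP u _).2 rfl, p, hlen, fun x hx j hj hxj => ?_⟩
    rw [hP] at hxj
    subst hxj
    rcases eq_or_ne x u with rfl | hxu
    · exact hj.false
    · exact (hj.trans_le (hmono huv)).not_ge (hidx_support x hx hxu)
  refine Set.mem_biUnion ?_ hu
  rcases (hmono huv).eq_or_lt with heq | hlt
  · exact heq ▸ Set.mem_insert _ _
  refine Set.mem_insert_of_mem _ ⟨hlt, ?_⟩
  obtain ⟨q, hq⟩ := p.exists_walk_support_subset_map idx hQ
  refine ⟨q.bypass, q.bypass_isPath, fun x hx hxu => ?_⟩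
  obtain ⟨y, hy, rfl⟩ := List.mem_map.1 (hq (q.support_bypass_subset_support hx))
  exact hidx_support y hy (by rintro rfl; exact hxu rfl)

end SimpleGraph

theorem stmt11_general [Fintype V] (G : SimpleGraph V) (ℓ k : ℕ) (f : ℕ → ℕ)
    (P : Fin ℓ → Set V)
    (hcover : ∀ v : V, ∃ i, v ∈ P i)
    (hdisj : ∀ i j, i ≠ j → Disjoint (P i) (P j))
    (Q : SimpleGraph (Fin ℓ))
    (hQ : ∀ i j, Q.Adj i j ↔ i ≠ j ∧ ∃ u ∈ P i, ∃ v ∈ P j, G.Adj u v)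
    -- the width of the partition (maximum back-degree in the fill-in graph of `Q`,
    -- characterized via paths whose internal vertices come later in the order) is at most `k`
    (hwidth : ∀ i : Fin ℓ,
      {j | j < i ∧ ∃ q : Q.Walk i j, q.IsPath ∧ ∀ x ∈ q.support, x ≠ j → i ≤ x}.ncard ≤ k)
    -- each part `P i` `f`-spreads in `G` minus the earlier parts
    (hflat : ∀ (r : ℕ) (i : Fin ℓ) (v : V),
      {w | w ∈ P i ∧ ∃ p : G.Walk v w, p.length ≤ r ∧
        ∀ x ∈ p.support, ∀ j, j < i → x ∉ P j}.ncard ≤ f r)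
    (r : ℕ) :
    scol G r ≤ (k + 1) * f r := by
  obtain ⟨idx, hP⟩ := exists_index_of_cover_of_disjoint P hcover hdisj
  obtain ⟨π, hmono⟩ := exists_linearOrder_monotone idx
  let _ := π
  have hQ' : ∀ a b, G.Adj a b → idx a ≠ idx b → Q.Adj (idx a) (idx b) := fun a b hab hne =>
    (hQ _ _).2 ⟨hne, a, (hP a _).2 rfl, b, (hP b _).2 rfl, hab⟩
  refine Nat.sInf_le ⟨π, fun v => ?_⟩
  calc (SReach G π r v).ncard
      ≤ (insert (idx v) (Q.fillInBackNeighborSet (idx v))).ncard * f r :=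
        Set.ncard_le_ncard_mul_of_subset_biUnion (Set.toFinite _)
          (SimpleGraph.sReach_subset_biUnion_partBall hP hmono hQ' r v)
          (fun j _ => hflat r j v)
    _ ≤ (k + 1) * f r := by
        gcongr
        exact (Set.ncard_insert_le _ _).trans (Nat.add_le_add_right (hwidth _) 1)

/-- If `G` admits an `f`-flat connected ordered partition `(P 0, …, P (ℓ-1))` of width `k`
(with `Q` the quotient minor obtained by contracting the parts), then
`col_r(G) ≤ (k+1)·f(r)`. -/
theorem stmt11 [Fintype V] (G : SimpleGraph V) (ℓ k : ℕ) (f : ℕ → ℕ)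
    (P : Fin ℓ → Set V)
    (hcover : ∀ v : V, ∃ i, v ∈ P i)
    (hdisj : ∀ i j, i ≠ j → Disjoint (P i) (P j))
    (hconn : ∀ i, (P i).Nonempty ∧
      ∀ u ∈ P i, ∀ v ∈ P i, ∃ p : G.Walk u v, ∀ x ∈ p.support, x ∈ P i)
    (Q : SimpleGraph (Fin ℓ))
    (hQ : ∀ i j, Q.Adj i j ↔ i ≠ j ∧ ∃ u ∈ P i, ∃ v ∈ P j, G.Adj u v)
    -- the width of the partition (maximum back-degree in the fill-in graph of `Q`,
    -- characterized via paths whose internal vertices come later in the order) is at most `k`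
    (hwidth : ∀ i : Fin ℓ,
      {j | j < i ∧ ∃ q : Q.Walk i j, q.IsPath ∧ ∀ x ∈ q.support, x ≠ j → i ≤ x}.ncard ≤ k)
    -- each part `P i` `f`-spreads in `G` minus the earlier parts
    (hflat : ∀ (r : ℕ) (i : Fin ℓ) (v : V),
      {w | w ∈ P i ∧ ∃ p : G.Walk v w, p.length ≤ r ∧
        ∀ x ∈ p.support, ∀ j, j < i → x ∉ P j}.ncard ≤ f r)
    (r : ℕ) (hr : 0 < r) :
    scol G r ≤ (k + 1) * f r :=
  stmt11_general G ℓ k f P hcover hdisj Q hQ hwidth hflat r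
end

section
/- Let G be a graph and π a linear order of V(G). Then for every vertex v, the strong reachability sets satisfy: u ∈ SReach[G^π_fill, π, v] (adjacency in the fill-in graph between u <_π v and v) if and only if there exists a path P in G between u and v such that u is the π-minimum vertex of P and all internal vertices of P are >_π v. Consequently the width of the order π equals max_v (|SReach_n[G,π,v]| − 1) where n = |V(G)|. -/
variable {V : Type*}

/-- One step of the fill-in procedure at vertex `x`: add edges between all
neighbors of `x` preceding `x` in the order. -/
def fillStep (π : LinearOrder V) (H : SimpleGraph V) (x : V) : SimpleGraph V :=
  H ⊔ SimpleGraph.fromRel (fun a b =>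
    letI := π
    H.Adj a x ∧ H.Adj b x ∧ a < x ∧ b < x)

def fillList (π : LinearOrder V) : List V → SimpleGraph V → SimpleGraph V
  | [], H => H
  | x :: xs, H => fillList π xs (fillStep π H x)

/-- The fill-in graph `G^π_fill`: process the vertices from the `π`-largest to the
`π`-smallest, at each step joining all earlier neighbors of the processed vertex. -/
def fillIn [Fintype V] (G : SimpleGraph V) (π : LinearOrder V) : SimpleGraph V :=
  letI := π
  fillList π ((Finset.univ.sort (· ≤ ·)).reverse) G

/-!
Eliminating vertices from the `π`-largest downwards maintains an invariant: once the vertices of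
`S` have been processed, `a` and `b` are adjacent exactly when some walk of `G` joins them with
all interior vertices in `S` and above both `a` and `b`. Processing the next vertex `x`,
which lies below all of `S`, preserves it: a new edge `ab` comes from edges `ax` and `bx` whose
witnessing walks concatenate, and conversely a path through `x` splits at `x` into two such
walks. For `S = V` this is the path characterisation; and since a path has fewer than `n` edges,
`SReach_n[G, π, v]` is `v` together with its smaller neighbours in the fill-in graph.
-/

namespace SimpleGraph

variable [LinearOrder V] {G : SimpleGraph V}

namespace Walk

def InteriorAbove (S : Set V) {a b : V} (p : G.Walk a b) : Prop :=
  ∀ w ∈ p.support, w ≠ a → w ≠ b → w ∈ S ∧ a < w ∧ b < w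

variable {S S' : Set V} {a b : V} {p : G.Walk a b}

lemma InteriorAbove.reverse (h : p.InteriorAbove S) : p.reverse.InteriorAbove S :=
  fun w hw hwb hwa =>
    let ⟨hwS, haw, hbw⟩ := h w (by simpa using hw) hwa hwb
    ⟨hwS, hbw, haw⟩

lemma InteriorAbove.mono (h : p.InteriorAbove S) (hSS' : S ⊆ S') : p.InteriorAbove S' :=
  fun w hw hwa hwb => (h w hw hwa hwb).imp_left (@hSS' w)

lemma InteriorAbove.bypass (h : p.InteriorAbove S) : p.bypass.InteriorAbove S :=
  fun w hw => h w (p.support_bypass_subset_support hw)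

end Walk

/-- The fill-in graph after eliminating the vertices of `S`. -/
def partialFill (G : SimpleGraph V) (S : Set V) : SimpleGraph V where
  Adj a b := a ≠ b ∧ ∃ p : G.Walk a b, p.InteriorAbove S
  symm := ⟨fun _ _ ⟨hab, p, hp⟩ => ⟨hab.symm, p.reverse, hp.reverse⟩⟩
  loopless := ⟨fun _ h => h.1 rfl⟩

variable {S : Set V} {a b x : V}

lemma partialFill_adj_iff_exists_isPath :
    (G.partialFill S).Adj a b ↔ a ≠ b ∧ ∃ p : G.Walk a b, p.IsPath ∧ p.InteriorAbove S :=
  and_congr_right fun _ =>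
    ⟨fun ⟨p, hp⟩ => ⟨p.bypass, p.bypass_isPath, hp.bypass⟩, fun ⟨p, _, hp⟩ => ⟨p, hp⟩⟩

lemma partialFill_mono : Monotone G.partialFill :=
  fun _ _ hSS' _ _ ⟨hab, p, hp⟩ => ⟨hab, p, hp.mono hSS'⟩

lemma partialFill_empty : G.partialFill ∅ = G := by
  ext a b
  constructor
  · rintro ⟨hab, p, hp⟩
    cases p with
    | nil => exact absurd rfl hab
    | @cons _ c _ hac q =>
      by_cases hcb : c = b
      · exact hcb ▸ hac
      · exact (hp c (by simp) hac.ne.symm hcb).1.elim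
  · intro h
    refine ⟨h.ne, h.toWalk, fun w hw hwa hwb => ?_⟩
    simp_all

lemma partialFill_insert_adj_of_adj_of_adj (hab : a ≠ b) (hax : (G.partialFill S).Adj a x)
    (hbx : (G.partialFill S).Adj b x) (ha : a < x) (hb : b < x) :
    (G.partialFill (insert x S)).Adj a b := by
  obtain ⟨-, p, hp⟩ := hax
  obtain ⟨-, q, hq⟩ := hbx
  refine ⟨hab, p.append q.reverse, fun w hw hwa hwb => ?_⟩
  rcases eq_or_ne w x with rfl | hwx
  · exact ⟨Set.mem_insert w S, ha, hb⟩
  rcases (Walk.mem_support_append_iff _ _).1 hw with hw | hw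
  · obtain ⟨hwS, haw, hxw⟩ := hp w hw hwa hwx
    exact ⟨Set.mem_insert_of_mem x hwS, haw, hb.trans hxw⟩
  · obtain ⟨hwS, hxw, hbw⟩ := hq.reverse w hw hwx hwb
    exact ⟨Set.mem_insert_of_mem x hwS, ha.trans hxw, hbw⟩

/-- The initial segment of the path up to `x` witnesses `ax`: its interior avoids `x` and `b`,
hence lies in `S` and so above `x`. -/
lemma partialFill_adj_of_isPath_of_mem (hS : ∀ w ∈ S, x < w) {p : G.Walk a b} (hp : p.IsPath)
    (hpS : p.InteriorAbove (insert x S)) (hx : x ∈ p.support) (hxa : x ≠ a) (hxb : x ≠ b) :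
    (G.partialFill S).Adj a x := by
  refine ⟨hxa.symm, p.takeUntil x hx, fun w hw hwa hwx => ?_⟩
  have hwb : w ≠ b := by
    rintro rfl
    exact Walk.endpoint_notMem_support_takeUntil hp hx hxb.symm hw
  obtain ⟨hwS, haw, -⟩ := hpS w (p.support_takeUntil_subset_support hx hw) hwa hwb
  have hwS : w ∈ S := hwS.resolve_left hwx
  exact ⟨hwS, haw, hS w hwS⟩

end SimpleGraph

open SimpleGraph

section

variable [π : LinearOrder V] {G : SimpleGraph V}

lemma fillStep_partialFill {S : Set V} {x : V} (hS : ∀ w ∈ S, x < w) :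
    fillStep π (G.partialFill S) x = G.partialFill (insert x S) := by
  ext a b
  simp only [fillStep, sup_adj, fromRel_adj]
  constructor
  · rintro (h | ⟨hab, ⟨hax, hbx, ha, hb⟩ | ⟨hbx, hax, hb, ha⟩⟩)
    · exact partialFill_mono (Set.subset_insert x S) h
    all_goals exact partialFill_insert_adj_of_adj_of_adj hab hax hbx ha hb
  · intro h
    obtain ⟨hab, p, hp, hpS⟩ := partialFill_adj_iff_exists_isPath.1 h
    by_cases hx : x ∈ p.support ∧ x ≠ a ∧ x ≠ b
    · obtain ⟨hx, hxa, hxb⟩ := hx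
      obtain ⟨-, ha, hb⟩ := hpS x hx hxa hxb
      exact Or.inr ⟨hab, Or.inl ⟨partialFill_adj_of_isPath_of_mem hS hp hpS hx hxa hxb,
        partialFill_adj_of_isPath_of_mem hS hp.reverse hpS.reverse (by simpa using hx) hxb hxa,
        ha, hb⟩⟩
    · refine Or.inl ⟨hab, p, fun w hw hwa hwb => ?_⟩
      obtain ⟨hwS, hw'⟩ := hpS w hw hwa hwb
      refine ⟨hwS.resolve_left ?_, hw'⟩
      rintro rfl
      exact hx ⟨hw, hwa, hwb⟩

lemma fillList_partialFill {L : List V} (hL : L.Pairwise (· > ·)) {S : Set V}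
    (hLS : ∀ y ∈ L, ∀ w ∈ S, y < w) :
    fillList π L (G.partialFill S) = G.partialFill (S ∪ {y | y ∈ L}) := by
  induction L generalizing S with
  | nil => simp [fillList]
  | cons x L ih =>
    have hLxS : ∀ y ∈ L, ∀ w ∈ insert x S, y < w := by
      rintro y hy w (rfl | hw)
      exacts [List.rel_of_pairwise_cons hL hy, hLS y (List.mem_cons_of_mem x hy) w hw]
    rw [fillList, fillStep_partialFill (hLS x List.mem_cons_self), ih hL.of_cons hLxS]
    congr 1
    ext y
    simp only [Set.mem_insert_iff, Set.mem_union, Set.mem_ofPred_eq, List.mem_cons]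
    tauto

lemma fillIn_eq_partialFill_univ [Fintype V] : fillIn G π = G.partialFill Set.univ := by
  have hL : ((Finset.univ.sort (· ≤ ·)).reverse : List V).Pairwise (· > ·) :=
    List.pairwise_reverse.2 (List.sortedLT_iff_pairwise.1 (Finset.sortedLT_sort _))
  rw [fillIn]
  conv_lhs => rw [← partialFill_empty (G := G)]
  rw [fillList_partialFill hL (by simp)]
  congr 1
  ext
  simp

lemma fillIn_adj_iff_exists_isPath [Fintype V] {u v : V} (huv : u < v) :
    (fillIn G π).Adj u v ↔ ∃ p : G.Walk u v, p.IsPath ∧ (∀ w ∈ p.support, u ≤ w) ∧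
      ∀ w ∈ p.support, w ≠ u → w ≠ v → v < w := by
  rw [fillIn_eq_partialFill_univ, partialFill_adj_iff_exists_isPath]
  refine ⟨fun ⟨_, p, hp, hpS⟩ =>
      ⟨p, hp, fun w hw => ?_, fun w hw hwu hwv => (hpS w hw hwu hwv).2.2⟩,
    fun ⟨p, hp, _, hpv⟩ => ⟨huv.ne, p, hp, fun w hw hwu hwv =>
      ⟨trivial, huv.trans (hpv w hw hwu hwv), hpv w hw hwu hwv⟩⟩⟩
  rcases eq_or_ne w u with rfl | hwu
  · rfl
  rcases eq_or_ne w v with rfl | hwv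
  · exact huv.le
  exact (hpS w hw hwu hwv).2.1.le

lemma sReach_card_eq_insert [Fintype V] (v : V) :
    SReach G π (Fintype.card V) v = insert v {u | (fillIn G π).Adj u v ∧ u < v} := by
  ext u
  rcases lt_trichotomy u v with huv | rfl | hvu
  · have hadj : (fillIn G π).Adj u v ↔
        ∃ p : G.Walk v u, p.IsPath ∧ p.InteriorAbove Set.univ := by
      rw [adj_comm, fillIn_eq_partialFill_univ, partialFill_adj_iff_exists_isPath]
      exact and_iff_right huv.ne'
    simp only [SReach, Set.mem_ofPred_eq, Set.mem_insert_iff, huv.ne, huv.le, huv, hadj,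
      true_and, and_true, false_or]
    exact exists_congr fun p =>
      ⟨fun ⟨hp, _, hpv⟩ => ⟨hp, fun w hw hwv hwu =>
          ⟨trivial, hpv w hw hwv hwu, huv.trans (hpv w hw hwv hwu)⟩⟩,
        fun ⟨hp, hpS⟩ => ⟨hp, hp.length_lt.le, fun w hw hwv hwu => (hpS w hw hwv hwu).2.1⟩⟩
  · simp only [Set.mem_insert_iff, true_or, iff_true]
    exact ⟨le_rfl, .nil, .nil, by simp, by simp⟩
  · simp [SReach, hvu.not_ge, hvu.ne', hvu.not_gt]

end

theorem stmt17 [Fintype V] (G : SimpleGraph V) (π : LinearOrder V) :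
    (∀ u v : V, π.lt u v →
      ((fillIn G π).Adj u v ↔ ∃ p : G.Walk u v, p.IsPath ∧
        (∀ w ∈ p.support, π.le u w) ∧
        (∀ w ∈ p.support, w ≠ u → w ≠ v → π.lt v w))) ∧
    (∀ v : V, {u | (fillIn G π).Adj u v ∧ π.lt u v}.ncard + 1
        = (SReach G π (Fintype.card V) v).ncard) := by
  let _ := π
  refine ⟨fun u v huv => fillIn_adj_iff_exists_isPath huv, fun v => ?_⟩
  rw [sReach_card_eq_insert, Set.ncard_insert_of_notMem (by simp)]
end
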